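/- arXiv:2308.06626 — 2 statements merged into one kernel-verified Lean document; each statement's English description precedes it below -/
import Mathlib

section
/- Let (X,d) be an ultrametric space generated by a labeled tree T with labeling l : X → [0,∞) (so that d = d_l), and let B be an open ball of (X,d). Then the subgraph of T induced on B is a tree (in particular it is connected), and the restriction d|_{B×B} coincides with the ultrametric generated by this induced tree together with the restricted labeling l|_B; in particular (B, d|_{B×B}) belongs to the class UGVL. -/
/-- `d` is an ultrametric on `X`: a nonnegative, symmetric function vanishing
exactly on the diagonal and satisfying the strong triangle inequality. -/
def IsUltrametricOn {X : Type*} (d : X → X → ℝ) : Prop :=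
  (∀ x y, 0 ≤ d x y) ∧ (∀ x y, d x y = d y x) ∧
  (∀ x y, d x y = 0 ↔ x = y) ∧
  (∀ x y z, d x y ≤ max (d x z) (d z y))

/-- `B` is an open ball of the space `(X, d)`. -/
def IsOpenBallOf {X : Type*} (d : X → X → ℝ) (B : Set X) : Prop :=
  ∃ c : X, ∃ r : ℝ, 0 < r ∧ B = {x | d c x < r}

/-- `C` is a centered sphere of the space `(X, d)`. -/
def IsCenteredSphereOf {X : Type*} (d : X → X → ℝ) (C : Set X) : Prop :=
  ∃ c ∈ C, ∃ r : ℝ, 0 ≤ r ∧ C = {x | d x c = r} ∪ {c}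

/-- The diameter `sup {d x y : x, y ∈ A}` of a subset `A` of `(X, d)`. -/
noncomputable def setDiam {X : Type*} (d : X → X → ℝ) (A : Set X) : ℝ :=
  sSup {r | ∃ x ∈ A, ∃ y ∈ A, r = d x y}

/-- A space is locally finite if all of its open balls are finite sets. -/
def IsLocallyFiniteOn {X : Type*} (d : X → X → ℝ) : Prop :=
  ∀ B : Set X, IsOpenBallOf d B → B.Finite

/-- The maximum of the (nonnegative) labels of the vertices of a walk `p`. -/
def walkMax {X : Type*} {T : SimpleGraph X} (l : X → ℝ) {u v : X} (p : T.Walk u v) : ℝ :=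
  (p.support.map l).foldr max 0

/-- The function `d` is generated by the tree `T` with nonnegative vertex labeling `l`,
i.e. `d u u = 0` and, for `u ≠ v`, `d u v` is the maximum of the labels of the vertices
on the (unique) path joining `u` and `v` in `T`. -/
def GeneratedBy {X : Type*} (d : X → X → ℝ) (T : SimpleGraph X) (l : X → ℝ) : Prop :=
  T.IsTree ∧ (∀ x, 0 ≤ l x) ∧ (∀ u, d u u = 0) ∧
  ∀ u v : X, u ≠ v → ∀ p : T.Walk u v, p.IsPath → d u v = walkMax l p

/-- `(X, d)` belongs to the class UGVL: it is generated by some labeled tree. -/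
def IsUGVL {X : Type*} (d : X → X → ℝ) : Prop :=
  ∃ (T : SimpleGraph X) (l : X → ℝ), GeneratedBy d T l

/-!
A vertex `w` on the path from `u` to `v` satisfies `d u w ≤ d u v`, because the labels on the
subpath from `u` to `w` are among those on the whole path. By the strong triangle inequality an
open ball therefore contains every path of `T` between two of its points, so the subgraph it
induces is a connected subgraph of a tree, hence a tree, and its paths are paths of `T` carrying
the same labels.
-/

namespace List

variable {α : Type*} [LinearOrder α]

theorem foldr_max_le_iff {L : List α} {b M : α} :
    L.foldr max b ≤ M ↔ b ≤ M ∧ ∀ x ∈ L, x ≤ M := by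
  induction L with
  | nil => simp
  | cons a t ih => simp only [foldr_cons, max_le_iff, ih, forall_mem_cons]; tauto

theorem foldr_max_le_foldr_max_of_subset {L L' : List α} (b : α) (h : L ⊆ L') :
    L.foldr max b ≤ L'.foldr max b :=
  foldr_max_le_iff.2
    ⟨(foldr_max_le_iff.1 le_rfl).1, fun _ hx => le_max_of_le' b (h hx) le_rfl⟩

end List

section WalkMax

variable {X Y : Type*} {T : SimpleGraph X}

theorem walkMax_nonneg (l : X → ℝ) {u v : X} (p : T.Walk u v) : 0 ≤ walkMax l p :=
  (List.foldr_max_le_iff.1 le_rfl).1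

theorem walkMax_le_of_support_subset (l : X → ℝ) {u v u' v' : X} {p : T.Walk u v}
    {q : T.Walk u' v'} (h : p.support ⊆ q.support) : walkMax l p ≤ walkMax l q :=
  List.foldr_max_le_foldr_max_of_subset 0 (List.map_subset l h)

theorem walkMax_map {G : SimpleGraph Y} (f : G →g T) (l : X → ℝ) {u v : Y} (p : G.Walk u v) :
    walkMax l (p.map f) = walkMax (l ∘ f) p := by
  simp only [walkMax, SimpleGraph.Walk.support_map, List.map_map]

end WalkMax

theorem SimpleGraph.IsTree.induce_of_path_support_subset {V : Type*} {T : SimpleGraph V}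
    (hT : T.IsTree) {S : Set V} (hne : S.Nonempty)
    (hS : ∀ u ∈ S, ∀ v ∈ S, ∀ p : T.Walk u v, p.IsPath → ∀ w ∈ p.support, w ∈ S) :
    (T.induce S).IsTree := by
  have : Nonempty S := hne.to_subtype
  refine ⟨.mk ?_, hT.isAcyclic.induce S⟩
  rintro ⟨u, hu⟩ ⟨v, hv⟩
  obtain ⟨p, hp, -⟩ := hT.existsUnique_path u v
  exact ⟨p.induce S (hS u hu v hv p hp)⟩

namespace GeneratedBy

variable {X : Type*} {d : X → X → ℝ} {T : SimpleGraph X} {l : X → ℝ}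

theorem le_of_mem_support (h : GeneratedBy d T l) {u v w : X} {p : T.Walk u v}
    (hp : p.IsPath) (hw : w ∈ p.support) : d u w ≤ d u v := by
  classical
  obtain ⟨-, -, hself, hpath⟩ := h
  by_cases huv : u = v
  · subst huv
    rw [SimpleGraph.Walk.nil_iff_support_eq.1 (SimpleGraph.Walk.isPath_iff_nil.1 hp),
      List.mem_singleton] at hw
    rw [hw]
  rw [hpath u v huv p hp]
  by_cases huw : u = w
  · rw [← huw, hself]
    exact walkMax_nonneg l p
  rw [hpath u w huw _ (hp.takeUntil hw)]
  exact walkMax_le_of_support_subset l (p.support_takeUntil_subset_support hw)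

theorem mem_ball_of_mem_support (h : GeneratedBy d T l) (hd : IsUltrametricOn d)
    {c u v w : X} {r : ℝ} (hu : d c u < r) (hv : d c v < r) {p : T.Walk u v}
    (hp : p.IsPath) (hw : w ∈ p.support) : d c w < r := by
  obtain ⟨-, hsym, -, hstri⟩ := hd
  have huv : d u v < r := (hstri u v c).trans_lt (max_lt (hsym u c ▸ hu) hv)
  calc d c w ≤ max (d c u) (d u w) := hstri c w u
    _ ≤ max (d c u) (d u v) := max_le_max le_rfl (h.le_of_mem_support hp hw)
    _ < r := max_lt hu huv

theorem induce (h : GeneratedBy d T l) {S : Set X} (hS : (T.induce S).IsTree) :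
    GeneratedBy (fun u v : S => d u v) (T.induce S) (fun x : S => l x) := by
  obtain ⟨-, hl, hself, hpath⟩ := h
  let f := SimpleGraph.Embedding.induce (G := T) S
  refine ⟨hS, fun x => hl x, fun u => hself u, fun u v huv p hp => ?_⟩
  exact (hpath u v (Subtype.coe_injective.ne huv) _ (hp.map f.injective)).trans
    (walkMax_map f.toHom l p)

end GeneratedBy

/-- If `(X, d)` is an ultrametric space generated by a labeled tree `(T, l)` and `B`
is an open ball of `(X, d)`, then the subgraph of `T` induced on `B` is a tree, the
restriction of `d` to `B` is generated by this induced tree with the restricted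
labeling, and in particular `(B, d|_{B×B})` belongs to UGVL. -/
theorem stmt_12 {X : Type*} (d : X → X → ℝ) (hd : IsUltrametricOn d)
    (T : SimpleGraph X) (l : X → ℝ) (hgen : GeneratedBy d T l)
    (B : Set X) (hB : IsOpenBallOf d B) :
    (T.induce B).IsTree ∧
    GeneratedBy (fun u v : B => d u v) (T.induce B) (fun x : B => l x) ∧
    IsUGVL (fun u v : B => d u v) := by
  obtain ⟨c, r, _, rfl⟩ := hB
  have hc : d c c < r := by rwa [hgen.2.2.1 c]
  have htree : (T.induce {x | d c x < r}).IsTree :=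
    hgen.1.induce_of_path_support_subset ⟨c, hc⟩
      fun _ hu _ hv _ hp _ hw => hgen.mem_ball_of_mem_support hd hu hv hp hw
  have hgenB := hgen.induce htree
  exact ⟨htree, hgenB, _, _, hgenB⟩
end

section
/- Let (X,d) be a finite nonempty ultrametric space. Then (X,d) belongs to the class UGVL if and only if every open ball of (X,d) is a centered sphere of (X,d). -/
namespace IsUltrametricOn

variable {X : Type*} {d : X → X → ℝ}

theorem nonneg (hd : IsUltrametricOn d) (x y : X) : 0 ≤ d x y := hd.1 x y

theorem symm (hd : IsUltrametricOn d) (x y : X) : d x y = d y x := hd.2.1 x y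

theorem dist_self (hd : IsUltrametricOn d) (x : X) : d x x = 0 := (hd.2.2.1 x x).2 rfl

theorem eq_of_dist_le_zero (hd : IsUltrametricOn d) {x y : X} (h : d x y ≤ 0) : x = y :=
  (hd.2.2.1 x y).1 (le_antisymm h (hd.nonneg x y))

theorem le_max (hd : IsUltrametricOn d) (x y z : X) : d x y ≤ max (d x z) (d z y) :=
  hd.2.2.2 x y z

end IsUltrametricOn

section Balls

variable {X : Type*} {d : X → X → ℝ}

def closedBallOf (d : X → X → ℝ) (x : X) (s : ℝ) : Set X := {y | d x y ≤ s}

def IsClosedBallOf (d : X → X → ℝ) (B : Set X) : Prop :=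
  ∃ x s, 0 ≤ s ∧ B = closedBallOf d x s

def IsCenterOf (d : X → X → ℝ) (B : Set X) (c : X) : Prop :=
  c ∈ B ∧ ∀ y ∈ B, ∀ y' ∈ B, y ≠ c → y' ≠ c → d y c = d y' c

@[simp]
theorem mem_closedBallOf {x y : X} {s : ℝ} : y ∈ closedBallOf d x s ↔ d x y ≤ s := Iff.rfl

theorem isClosedBallOf_closedBallOf {x : X} {s : ℝ} (hs : 0 ≤ s) :
    IsClosedBallOf d (closedBallOf d x s) :=
  ⟨x, s, hs, rfl⟩

theorem mem_closedBallOf_self (hd : IsUltrametricOn d) {x : X} {s : ℝ} (hs : 0 ≤ s) :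
    x ∈ closedBallOf d x s := by
  simpa [hd.dist_self] using hs

theorem closedBallOf_zero (hd : IsUltrametricOn d) (x : X) : closedBallOf d x 0 = {x} := by
  ext y
  simp only [mem_closedBallOf, Set.mem_singleton_iff]
  exact ⟨fun h => (hd.eq_of_dist_le_zero h).symm, fun h => h ▸ (hd.dist_self x).le⟩

theorem closedBallOf_eq_of_mem (hd : IsUltrametricOn d) {x y : X} {s : ℝ}
    (hy : y ∈ closedBallOf d x s) : closedBallOf d x s = closedBallOf d y s := by
  ext z
  simp only [mem_closedBallOf] at hy ⊢
  constructor <;> intro hz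
  · exact (hd.le_max y z x).trans (max_le (hd.symm y x ▸ hy) hz)
  · exact (hd.le_max x z y).trans (max_le hy hz)

theorem IsClosedBallOf.eq_closedBallOf_of_mem (hd : IsUltrametricOn d) {B : Set X}
    (hB : IsClosedBallOf d B) {z : X} (hz : z ∈ B) : ∃ s, 0 ≤ s ∧ B = closedBallOf d z s := by
  obtain ⟨x, s, hs, rfl⟩ := hB
  exact ⟨s, hs, closedBallOf_eq_of_mem hd hz⟩

theorem IsClosedBallOf.subset_or_subset (hd : IsUltrametricOn d) {B B' : Set X}
    (hB : IsClosedBallOf d B) (hB' : IsClosedBallOf d B') {z : X} (hz : z ∈ B) (hz' : z ∈ B') :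
    B ⊆ B' ∨ B' ⊆ B := by
  obtain ⟨s, -, rfl⟩ := hB.eq_closedBallOf_of_mem hd hz
  obtain ⟨t, -, rfl⟩ := hB'.eq_closedBallOf_of_mem hd hz'
  rcases le_total s t with h | h
  · exact .inl fun y hy => le_trans hy h
  · exact .inr fun y hy => le_trans hy h

theorem IsClosedBallOf.closedBallOf_subset (hd : IsUltrametricOn d) {B : Set X}
    (hB : IsClosedBallOf d B) {u v : X} (hu : u ∈ B) (hv : v ∈ B) :
    closedBallOf d u (d u v) ⊆ B := by
  obtain ⟨s, -, rfl⟩ := hB.eq_closedBallOf_of_mem hd hu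
  exact fun y (hy : d u y ≤ d u v) => show d u y ≤ s from hy.trans hv

/-- In a finite space the radius of a closed ball can be raised up to the next distance. -/
theorem IsClosedBallOf.isOpenBallOf [Finite X] {B : Set X} (hB : IsClosedBallOf d B) :
    IsOpenBallOf d B := by
  obtain ⟨x, s, hs, rfl⟩ := hB
  obtain ⟨r, hsr, hr⟩ : ∃ r, s < r ∧ ∀ y, d x y < r → d x y ≤ s := by
    set R := d x '' {y | s < d x y}
    obtain hR | hR := R.eq_empty_or_nonempty
    · exact ⟨s + 1, by linarith, fun y _ => not_lt.1 fun h => hR.subset ⟨y, h, rfl⟩⟩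
    · obtain ⟨y₀, hy₀, hr⟩ := hR.csInf_mem (Set.toFinite R)
      exact ⟨sInf R, hr ▸ hy₀, fun y hy => not_lt.1 fun h =>
        (csInf_le (Set.toFinite R).bddBelow ⟨y, h, rfl⟩).not_gt hy⟩
  exact ⟨x, r, hs.trans_lt hsr, Set.ext fun y => ⟨fun hy => lt_of_le_of_lt hy hsr, hr y⟩⟩

theorem isCenteredSphereOf_iff (hd : IsUltrametricOn d) {B : Set X} (hB : IsOpenBallOf d B) :
    IsCenteredSphereOf d B ↔ ∃ c, IsCenterOf d B c := by
  constructor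
  · rintro ⟨c, hc, r, -, rfl⟩
    refine ⟨c, hc, ?_⟩
    rintro y (hy | hy) y' (hy' | hy') hyc hy'c
    exacts [hy.trans hy'.symm, absurd hy' hy'c, absurd hy hyc, absurd hy hyc]
  · rintro ⟨c, hcB, hc⟩
    obtain ⟨x, r, -, rfl⟩ := hB
    by_cases htriv : ∃ y ∈ {z | d x z < r}, y ≠ c
    · obtain ⟨y, hy, hyc⟩ := htriv
      refine ⟨c, hcB, d y c, hd.nonneg y c, Set.ext fun z => ⟨fun hz => ?_, ?_⟩⟩
      · by_cases hzc : z = c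
        exacts [.inr hzc, .inl (hc z hz y hy hzc hyc)]
      · rintro (hz | rfl)
        · have hyc : d y c < r := (hd.le_max y c x).trans_lt
            (max_lt (hd.symm y x ▸ hy) hcB)
          exact (hd.le_max x z c).trans_lt (max_lt hcB (hd.symm c z ▸ hz ▸ hyc))
        · exact hcB
    · push Not at htriv
      refine ⟨c, hcB, 0, le_rfl, Set.ext fun z => ⟨fun hz => .inr (htriv z hz), ?_⟩⟩
      rintro (hz | rfl)
      · rwa [hd.eq_of_dist_le_zero hz.le]
      · exact hcB

theorem IsCenterOf.eq_closedBallOf (hd : IsUltrametricOn d) {B : Set X} {c y : X}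
    (hc : IsCenterOf d B c) (hB : IsClosedBallOf d B) (hy : y ∈ B) (hyc : y ≠ c) :
    B = closedBallOf d c (d c y) := by
  obtain ⟨s, -, hBs⟩ := hB.eq_closedBallOf_of_mem hd hc.1
  refine Set.Subset.antisymm (fun z hz => ?_) fun z hz => ?_
  · by_cases hzc : z = c
    · subst hzc
      exact mem_closedBallOf_self hd (hd.nonneg z y)
    · simp only [mem_closedBallOf, hd.symm c, hc.2 z hz y hy hzc hyc, le_refl]
  · rw [hBs] at hy ⊢
    exact show d c z ≤ s from le_trans hz hy

theorem IsCenterOf.eq_of_subset (hd : IsUltrametricOn d) {B C : Set X} {c : X}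
    (hc : IsCenterOf d C c) (hC : IsClosedBallOf d C) (hB : IsClosedBallOf d B) (hcB : c ∈ B)
    (hBC : B ⊆ C) (hBnt : B.Nontrivial) : B = C := by
  obtain ⟨y, hy, hyc⟩ := hBnt.exists_ne c
  refine hBC.antisymm ?_
  rw [hc.eq_closedBallOf hd hC (hBC hy) hyc]
  exact hB.closedBallOf_subset hd hcB hy

end Balls

section Walks

variable {X : Type*} {T : SimpleGraph X} {l : X → ℝ} {u v : X}

theorem le_walkMax {p : T.Walk u v} {a : X} (ha : a ∈ p.support) : l a ≤ walkMax l p :=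
  List.le_max_of_le' 0 (List.mem_map_of_mem ha) le_rfl

theorem walkMax_le_iff {p : T.Walk u v} {m : ℝ} :
    walkMax l p ≤ m ↔ 0 ≤ m ∧ ∀ a ∈ p.support, l a ≤ m := by
  unfold walkMax
  induction p.support <;> simp_all [and_left_comm]

theorem walkMax_mono {p : T.Walk u v} {u' v' : X} {q : T.Walk u' v'}
    (h : p.support ⊆ q.support) : walkMax l p ≤ walkMax l q := by
  obtain ⟨h0, hq⟩ := walkMax_le_iff.1 (le_refl (walkMax l q))
  exact walkMax_le_iff.2 ⟨h0, fun a ha => hq a (h ha)⟩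

end Walks

section Forward

variable {X : Type*} {d : X → X → ℝ} {T : SimpleGraph X} {l : X → ℝ}

theorem GeneratedBy.dist_le_of_mem_support (hd : IsUltrametricOn d) (hG : GeneratedBy d T l)
    {u v a : X} {p : T.Walk u v} (hp : p.IsPath) (ha : a ∈ p.support) : d u a ≤ d u v := by
  classical
  obtain rfl | hua := eq_or_ne u a
  · simpa [hd.dist_self] using hd.nonneg u v
  have huv : u ≠ v := by
    rintro rfl
    rw [SimpleGraph.Walk.nil_iff_support_eq.1 (SimpleGraph.Walk.isPath_iff_nil.1 hp),
      List.mem_singleton] at ha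
    exact hua ha.symm
  rw [hG.2.2.2 u a hua _ (hp.takeUntil ha), hG.2.2.2 u v huv p hp]
  exact walkMax_mono (p.support_takeUntil_subset_support ha)

/-- A vertex of maximal label in the ball is a center: tree paths from the other points of the
ball to it stay inside the ball. -/
theorem GeneratedBy.exists_isCenterOf [Finite X] (hd : IsUltrametricOn d)
    (hG : GeneratedBy d T l) {B : Set X} (hB : IsOpenBallOf d B) : ∃ c, IsCenterOf d B c := by
  obtain ⟨x, r, hr, rfl⟩ := hB
  have hxB : d x x < r := by rwa [hd.dist_self]
  obtain ⟨c, hcB, hcmax⟩ := Set.exists_max_image _ l (Set.toFinite {y | d x y < r}) ⟨x, hxB⟩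
  suffices h : ∀ y, d x y < r → y ≠ c → d y c = l c from
    ⟨c, hcB, fun y hy y' hy' hyc hy'c => (h y hy hyc).trans (h y' hy' hy'c).symm⟩
  intro y hy hyc
  obtain ⟨p, hp⟩ := (hG.1.connected.preconnected y c).exists_isPath
  rw [hG.2.2.2 y c hyc p hp]
  refine le_antisymm (walkMax_le_iff.2 ⟨hG.2.1 c, fun a ha => ?_⟩) (le_walkMax p.end_mem_support)
  have hya : d y a < r := (hG.dist_le_of_mem_support hd hp ha).trans_lt
    ((hd.le_max y c x).trans_lt (max_lt (hd.symm y x ▸ hy) hcB))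
  exact hcmax a ((hd.le_max x a y).trans_lt (max_lt hy hya))

end Forward

theorem SimpleGraph.isTree_fromRel_of_lt {V α : Type*} [Finite V] [Nonempty V] [Preorder α]
    [WellFoundedGT α] {f : V → V} (rank : V → α) (hrank : ∀ x, f x ≠ x → rank x < rank (f x))
    (hfix : ∀ x y, f x = x → f y = y → x = y) : (fromRel fun x y => f x = y).IsTree := by
  set G := fromRel fun x y => f x = y
  have hadj : ∀ x, f x ≠ x → G.Adj x (f x) := fun x hx => ⟨hx.symm, .inl rfl⟩
  have hreach : ∀ x, ∃ r, f r = r ∧ G.Reachable x r := by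
    intro x
    induction x using (wellFounded_gt.onFun (f := rank)).induction with
    | _ x ih =>
      by_cases hx : f x = x
      · exact ⟨x, hx, .rfl⟩
      · obtain ⟨r, hr, hxr⟩ := ih (f x) (hrank x hx)
        exact ⟨r, hr, (hadj x hx).reachable.trans hxr⟩
  obtain ⟨root, hroot, -⟩ := hreach (Classical.arbitrary V)
  have hconn : G.Connected := (connected_iff_exists_forall_reachable G).2 ⟨root, fun x => by
    obtain ⟨r, hr, hxr⟩ := hreach x
    exact hfix r root hr hroot ▸ hxr.symm⟩
  -- each edge is `s(x, f x)` for exactly one non-fixed point `x`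
  have hedges : Nat.card G.edgeSet = Nat.card {x // f x ≠ x} := by
    refine (Nat.card_eq_of_bijective (fun x => ⟨s(x.1, f x.1), hadj x.1 x.2⟩) ⟨?_, ?_⟩).symm
    · intro x y hxy
      rcases Sym2.eq_iff.1 (congrArg Subtype.val hxy) with ⟨h, -⟩ | ⟨h1, h2⟩
      · exact Subtype.ext h
      · have := ((hrank x x.2).trans_eq (congrArg rank h2)).trans (hrank y y.2)
        exact absurd (h1 ▸ this) (lt_irrefl _)
    · rintro ⟨e, he⟩
      induction e using Sym2.ind with
      | _ a b =>
        obtain ⟨hab, rfl | rfl⟩ : G.Adj a b := he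
        · exact ⟨⟨a, hab.symm⟩, rfl⟩
        · exact ⟨⟨b, hab⟩, Subtype.ext Sym2.eq_swap⟩
  have hnonfixed : Nat.card {x // f x ≠ x} + 1 = Nat.card V := by
    have hfixed : ∀ x, f x = x ↔ x = root := fun x => ⟨(hfix x root · hroot), (· ▸ hroot)⟩
    rw [Nat.card_congr (Equiv.subtypeEquivRight fun x => not_congr (hfixed x)),
      ← Set.ncard_add_ncard_compl {root}, Set.ncard_singleton, add_comm]
    rfl
  exact (isTree_iff_connected_and_card).2 ⟨hconn, hedges ▸ hnonfixed⟩

section Generation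

variable {X : Type*} {d : X → X → ℝ} {T : SimpleGraph X} {l : X → ℝ}

theorem dist_le_walkMax (hd : IsUltrametricOn d)
    (hadj : ∀ a b, T.Adj a b → d a b ≤ max (l a) (l b)) {u v : X} (p : T.Walk u v) :
    d u v ≤ walkMax l p := by
  induction p with
  | nil => simp [walkMax, hd.dist_self]
  | @cons u v w h q ih =>
    have hu : l u ≤ walkMax l (.cons h q) := le_walkMax (by simp)
    have hv : l v ≤ walkMax l (.cons h q) := le_walkMax (by simp)
    have hq : walkMax l q ≤ walkMax l (.cons h q) := walkMax_mono (by simp)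
    exact (hd.le_max u w v).trans (max_le ((hadj u v h).trans (max_le hu hv)) (ih.trans hq))

/-- By `dist_le_walkMax` and the uniqueness of tree paths, one walk from `u` to `v` with labels
at most `d u v` already determines the value along the path. -/
theorem generatedBy_of_exists_walk (hd : IsUltrametricOn d) (hT : T.IsTree)
    (hl : ∀ x, 0 ≤ l x) (hadj : ∀ a b, T.Adj a b → d a b ≤ max (l a) (l b))
    (hwalk : ∀ u v, u ≠ v → ∃ p : T.Walk u v, walkMax l p ≤ d u v) : GeneratedBy d T l := by
  classical
  refine ⟨hT, hl, hd.dist_self, fun u v huv q hq => ?_⟩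
  obtain ⟨p, hp⟩ := hwalk u v huv
  have hqp : q = p.toPath := congrArg Subtype.val
    ((hT.isAcyclic.subsingleton_path u v).elim ⟨q, hq⟩ p.toPath)
  refine le_antisymm (dist_le_walkMax hd hadj q) ?_
  rw [hqp]
  exact (walkMax_mono p.support_toPath_subset_support).trans hp

end Generation

structure CenteredUltrametric (X : Type*) where
  d : X → X → ℝ
  isUltrametricOn : IsUltrametricOn d
  center : Set X → X
  isCenterOf_center : ∀ B, IsClosedBallOf d B → IsCenterOf d B (center B)

namespace CenteredUltrametric

open Set

variable {X : Type*} (S : CenteredUltrametric X) {B : Set X} {u v x y z : X}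

/-- The largest radius at which `z` is the chosen center of the closed ball around it. -/
noncomputable def lab (z : X) : ℝ :=
  sSup (S.d z '' {y | S.center (closedBallOf S.d z (S.d z y)) = z})

noncomputable def maxBall (z : X) : Set X := closedBallOf S.d z (S.lab z)

/-- The radius of the next larger closed ball around `z`; the junk value `0` when
`maxBall z = univ` makes that point its own parent. -/
noncomputable def nextRadius (z : X) : ℝ := sInf (S.d z '' (S.maxBall z)ᶜ)

noncomputable def parentBall (z : X) : Set X := closedBallOf S.d z (S.nextRadius z)

noncomputable def parent (z : X) : X := S.center (S.parentBall z)

noncomputable def tree : SimpleGraph X := SimpleGraph.fromRel fun x y => S.parent x = y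

theorem center_closedBallOf_zero (z : X) : S.center (closedBallOf S.d z 0) = z := by
  simpa [closedBallOf_zero S.isUltrametricOn] using
    (S.isCenterOf_center _ (isClosedBallOf_closedBallOf (x := z) le_rfl)).1

theorem center_closedBallOf_dist_self (z : X) :
    S.center (closedBallOf S.d z (S.d z z)) = z := by
  rw [S.isUltrametricOn.dist_self, S.center_closedBallOf_zero]

theorem nextRadius_nonneg (z : X) : 0 ≤ S.nextRadius z :=
  Real.sInf_nonneg (by rintro _ ⟨y, -, rfl⟩; exact S.isUltrametricOn.nonneg z y)

variable [Finite X]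

theorem exists_dist_eq_lab (z : X) :
    ∃ y, S.center (closedBallOf S.d z (S.d z y)) = z ∧ S.d z y = S.lab z :=
  ((nonempty_of_mem (s := {y | S.center (closedBallOf S.d z (S.d z y)) = z})
    (S.center_closedBallOf_dist_self z)).image (S.d z)).csSup_mem (Set.toFinite _)

theorem dist_le_lab (h : S.center (closedBallOf S.d z (S.d z y)) = z) : S.d z y ≤ S.lab z :=
  le_csSup (Set.toFinite _).bddAbove ⟨y, h, rfl⟩

theorem lab_nonneg (z : X) : 0 ≤ S.lab z := by
  simpa [S.isUltrametricOn.dist_self] using S.dist_le_lab (S.center_closedBallOf_dist_self z)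

theorem mem_maxBall_self (z : X) : z ∈ S.maxBall z :=
  mem_closedBallOf_self S.isUltrametricOn (S.lab_nonneg z)

theorem isClosedBallOf_maxBall (z : X) : IsClosedBallOf S.d (S.maxBall z) :=
  isClosedBallOf_closedBallOf (S.lab_nonneg z)

theorem center_maxBall (z : X) : S.center (S.maxBall z) = z := by
  obtain ⟨y, hy, hyl⟩ := S.exists_dist_eq_lab z
  rwa [maxBall, ← hyl]

theorem isCenterOf_maxBall (z : X) : IsCenterOf S.d (S.maxBall z) z := by
  simpa only [S.center_maxBall] using S.isCenterOf_center _ (S.isClosedBallOf_maxBall z)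

theorem subset_maxBall (hB : IsClosedBallOf S.d B) (hz : S.center B = z) : B ⊆ S.maxBall z := by
  intro y hy
  obtain rfl | hyz := eq_or_ne y z
  · exact S.mem_maxBall_self y
  have hBy := (hz ▸ S.isCenterOf_center B hB).eq_closedBallOf S.isUltrametricOn hB hy hyz
  exact S.dist_le_lab (hBy ▸ hz)

theorem maxBall_eq (hB : IsClosedBallOf S.d B) (hz : S.center B = z) (hBnt : B.Nontrivial) :
    S.maxBall z = B :=
  ((S.isCenterOf_maxBall z).eq_of_subset S.isUltrametricOn (S.isClosedBallOf_maxBall z) hB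
    (hz ▸ (S.isCenterOf_center B hB).1) (S.subset_maxBall hB hz) hBnt).symm

theorem dist_eq_lab (hy : y ∈ S.maxBall z) (hyz : y ≠ z) : S.d z y = S.lab z := by
  refine le_antisymm hy ?_
  obtain ⟨y', -, hy'⟩ := S.exists_dist_eq_lab z
  have hy'mem : y' ∈ S.maxBall z := show S.d z y' ≤ S.lab z from hy'.le
  rw [(S.isCenterOf_maxBall z).eq_closedBallOf S.isUltrametricOn (S.isClosedBallOf_maxBall z)
    hy hyz] at hy'mem
  exact hy' ▸ hy'mem

theorem lab_le_of_maxBall_subset {s : ℝ} (h : S.maxBall z ⊆ closedBallOf S.d x s) :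
    S.lab z ≤ s := by
  rw [closedBallOf_eq_of_mem S.isUltrametricOn (h (S.mem_maxBall_self z))] at h
  obtain ⟨y, -, hy⟩ := S.exists_dist_eq_lab z
  exact hy ▸ h (show S.d z y ≤ S.lab z from hy.le)

theorem maxBall_ssubset (hB : IsClosedBallOf S.d B) (hBnt : B.Nontrivial) (hz : z ∈ B)
    (hzc : z ≠ S.center B) : S.maxBall z ⊂ B := by
  have hne : S.maxBall z ≠ B := fun h => hzc (h ▸ S.center_maxBall z).symm
  rcases (S.isClosedBallOf_maxBall z).subset_or_subset S.isUltrametricOn hB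
    (S.mem_maxBall_self z) hz with h | h
  · exact h.ssubset_of_ne hne
  · exact absurd ((S.isCenterOf_maxBall z).eq_of_subset S.isUltrametricOn
      (S.isClosedBallOf_maxBall z) hB hz h hBnt).symm hne

theorem exists_dist_eq_nextRadius (h : S.maxBall z ≠ univ) :
    ∃ y ∉ S.maxBall z, S.d z y = S.nextRadius z :=
  ((nonempty_compl.2 h).image _).csInf_mem (Set.toFinite _)

theorem nextRadius_le (hy : y ∉ S.maxBall z) : S.nextRadius z ≤ S.d z y :=
  csInf_le (Set.toFinite _).bddBelow ⟨y, hy, rfl⟩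

theorem maxBall_ssubset_parentBall (h : S.maxBall z ≠ univ) : S.maxBall z ⊂ S.parentBall z := by
  obtain ⟨y, hy, hyr⟩ := S.exists_dist_eq_nextRadius h
  refine (ssubset_iff_of_subset fun x (hx : S.d z x ≤ S.lab z) => ?_).2 ⟨y, hyr.le, hy⟩
  exact show S.d z x ≤ S.nextRadius z from hx.trans (hyr ▸ (not_le.1 hy).le)

theorem parentBall_subset (hB : IsClosedBallOf S.d B) (h : S.maxBall z ⊂ B) :
    S.parentBall z ⊆ B := by
  obtain ⟨s, -, rfl⟩ :=
    hB.eq_closedBallOf_of_mem S.isUltrametricOn (h.subset (S.mem_maxBall_self z))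
  obtain ⟨y, hyB, hy⟩ := exists_of_ssubset h
  exact fun x (hx : S.d z x ≤ S.nextRadius z) =>
    show S.d z x ≤ s from hx.trans ((S.nextRadius_le hy).trans hyB)

theorem maxBall_parent (h : S.maxBall z ≠ univ) : S.maxBall (S.parent z) = S.parentBall z := by
  obtain ⟨y, hyP, hy⟩ := exists_of_ssubset (S.maxBall_ssubset_parentBall h)
  exact S.maxBall_eq (isClosedBallOf_closedBallOf (S.nextRadius_nonneg z)) rfl
    ⟨z, (S.maxBall_ssubset_parentBall h).subset (S.mem_maxBall_self z), y, hyP,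
      fun hzy => hy (hzy ▸ S.mem_maxBall_self z)⟩

theorem maxBall_lt_maxBall_parent (h : S.maxBall z ≠ univ) :
    S.maxBall z < S.maxBall (S.parent z) :=
  S.maxBall_parent h ▸ S.maxBall_ssubset_parentBall h

theorem parent_eq_self_iff : S.parent z = z ↔ S.maxBall z = univ := by
  refine ⟨fun hz => by_contra fun h => (S.maxBall_lt_maxBall_parent h).ne (by rw [hz]),
    fun h => ?_⟩
  rw [parent, parentBall, nextRadius, h, compl_univ, image_empty, Real.sInf_empty,
    S.center_closedBallOf_zero]

theorem dist_parent (h : S.parent z ≠ z) : S.d (S.parent z) z = S.lab (S.parent z) := by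
  refine S.dist_eq_lab ?_ h.symm
  rw [S.maxBall_parent (mt S.parent_eq_self_iff.2 h)]
  exact mem_closedBallOf_self S.isUltrametricOn (S.nextRadius_nonneg z)

theorem isTree_tree [Nonempty X] : S.tree.IsTree :=
  SimpleGraph.isTree_fromRel_of_lt S.maxBall
    (fun _ hx => S.maxBall_lt_maxBall_parent (mt S.parent_eq_self_iff.2 hx))
    fun x y hx hy => by
      rw [← S.center_maxBall x, ← S.center_maxBall y, S.parent_eq_self_iff.1 hx,
        S.parent_eq_self_iff.1 hy]

theorem dist_le_max_lab_of_adj (h : S.tree.Adj x y) : S.d x y ≤ max (S.lab x) (S.lab y) := by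
  obtain ⟨hxy, rfl | rfl⟩ := h
  · rw [S.isUltrametricOn.symm, S.dist_parent hxy.symm]
    exact le_max_right _ _
  · rw [S.dist_parent hxy]
    exact le_max_left _ _

theorem exists_walk_to_center (hB : IsClosedBallOf S.d B) (hBnt : B.Nontrivial) (hz : z ∈ B) :
    ∃ p : S.tree.Walk z (S.center B), ∀ a ∈ p.support, S.maxBall a ⊆ B := by
  induction z using (wellFounded_gt.onFun (f := S.maxBall)).induction with
  | _ z ih =>
    by_cases hzc : z = S.center B
    · subst hzc
      refine ⟨.nil, fun a ha => ?_⟩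
      rw [SimpleGraph.Walk.support_nil, List.mem_singleton] at ha
      rw [ha, S.maxBall_eq hB rfl hBnt]
    have hzB := S.maxBall_ssubset hB hBnt hz hzc
    have hzu : S.maxBall z ≠ univ := fun h => hzB.2 (h ▸ subset_univ B)
    have hpz : S.parent z ≠ z := mt S.parent_eq_self_iff.1 hzu
    have hpB : S.maxBall (S.parent z) ⊆ B := S.maxBall_parent hzu ▸ S.parentBall_subset hB hzB
    obtain ⟨p, hp⟩ := ih _ (S.maxBall_lt_maxBall_parent hzu) (hpB (S.mem_maxBall_self _))
    have hadj : S.tree.Adj z (S.parent z) := ⟨hpz.symm, .inl rfl⟩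
    refine ⟨.cons hadj p, fun a ha => ?_⟩
    rw [SimpleGraph.Walk.support_cons, List.mem_cons] at ha
    exact ha.elim (· ▸ hzB.subset) (hp a)

theorem exists_walk_walkMax_le (huv : u ≠ v) :
    ∃ p : S.tree.Walk u v, walkMax S.lab p ≤ S.d u v := by
  have hd := S.isUltrametricOn
  set B := closedBallOf S.d u (S.d u v)
  have hB : IsClosedBallOf S.d B := isClosedBallOf_closedBallOf (hd.nonneg u v)
  have hu : u ∈ B := mem_closedBallOf_self hd (hd.nonneg u v)
  have hv : v ∈ B := show S.d u v ≤ S.d u v from le_rfl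
  obtain ⟨p, hp⟩ := S.exists_walk_to_center hB ⟨u, hu, v, hv, huv⟩ hu
  obtain ⟨q, hq⟩ := S.exists_walk_to_center hB ⟨u, hu, v, hv, huv⟩ hv
  refine ⟨p.append q.reverse, walkMax_le_iff.2 ⟨hd.nonneg u v, fun a ha => ?_⟩⟩
  rw [SimpleGraph.Walk.mem_support_append_iff, SimpleGraph.Walk.support_reverse,
    List.mem_reverse] at ha
  exact S.lab_le_of_maxBall_subset (ha.elim (hp a) (hq a))

theorem generatedBy [Nonempty X] : GeneratedBy S.d S.tree S.lab :=
  generatedBy_of_exists_walk S.isUltrametricOn S.isTree_tree S.lab_nonneg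
    (fun _ _ => S.dist_le_max_lab_of_adj) fun _ _ => S.exists_walk_walkMax_le

end CenteredUltrametric

/-- A finite nonempty ultrametric space belongs to UGVL iff every open ball is a
centered sphere. -/
theorem stmt_13 {X : Type*} [Finite X] (hne : Nonempty X)
    (d : X → X → ℝ) (hd : IsUltrametricOn d) :
    IsUGVL d ↔ ∀ B : Set X, IsOpenBallOf d B → IsCenteredSphereOf d B := by
  refine ⟨fun ⟨_, _, hG⟩ B hB => (isCenteredSphereOf_iff hd hB).2 (hG.exists_isCenterOf hd hB),
    fun h => ?_⟩
  have hcenter : ∀ B, ∃ c, IsClosedBallOf d B → IsCenterOf d B c := by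
    intro B
    by_cases hB : IsClosedBallOf d B
    · obtain ⟨c, hc⟩ := (isCenteredSphereOf_iff hd hB.isOpenBallOf).1 (h B hB.isOpenBallOf)
      exact ⟨c, fun _ => hc⟩
    · exact ⟨hne.some, fun h => absurd h hB⟩
  choose center hcenter using hcenter
  exact ⟨_, _, CenteredUltrametric.generatedBy ⟨d, hd, center, hcenter⟩⟩
end
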